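/- Let E = E(n,c) be a uniform Cantor set, and suppose μ_P (determined by an ultimately 1-uniform n-matching sequence P) extends to a doubling measure ν on [0,1]. Then ∑_{k=1}^∞ n_k c_k < ∞. -/

import Mathlib

open Finset MeasureTheory Filter Topology
open scoped ENNReal NNReal

/-- Length of a level-`k` component of the uniform Cantor set `E(n,c)`. -/
noncomputable def cdelta (n : ℕ → ℕ) (c : ℕ → ℝ) (k : ℕ) : ℝ :=
  ∏ i ∈ Finset.Icc 1 k, (1 - ((n i : ℝ) - 1) * c i) / (n i : ℝ)

/-- Length of a level-`k` gap of the uniform Cantor set `E(n,c)`. -/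
noncomputable def ceps (n : ℕ → ℕ) (c : ℕ → ℝ) (k : ℕ) : ℝ :=
  c k * cdelta n c (k - 1)

/-- Left endpoint of the level-`k` component indexed by the word `w` (positions `1,…,k`). -/
noncomputable def leftpt (n : ℕ → ℕ) (c : ℕ → ℝ) (w : ℕ → ℕ) (k : ℕ) : ℝ :=
  ∑ j ∈ Finset.Icc 1 k, ((w j : ℝ) - 1) * (cdelta n c j + ceps n c j)

/-- `w` is a word of length `k`: `1 ≤ w j ≤ n j` for `1 ≤ j ≤ k`. -/
def IsWord (n : ℕ → ℕ) (w : ℕ → ℕ) (k : ℕ) : Prop :=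
  ∀ j, 1 ≤ j → j ≤ k → 1 ≤ w j ∧ w j ≤ n j

/-- The level-`k` component `I_w` of the uniform Cantor set. -/
noncomputable def cInt (n : ℕ → ℕ) (c : ℕ → ℝ) (w : ℕ → ℕ) (k : ℕ) : Set ℝ :=
  Set.Icc (leftpt n c w k) (leftpt n c w k + cdelta n c k)

/-- The set `E_k`, union of all level-`k` components. -/
def levelSet (n : ℕ → ℕ) (c : ℕ → ℝ) (k : ℕ) : Set ℝ :=
  ⋃ w ∈ {w : ℕ → ℕ | IsWord n w k}, cInt n c w k

/-- The uniform Cantor set `E(n,c) = ⋂_k E_k`. -/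
def uniformCantorSet (n : ℕ → ℕ) (c : ℕ → ℝ) : Set ℝ :=
  ⋂ k, levelSet n c k

/-- Standing assumptions on the data: `n_k ≥ 2`, `c_k ∈ (0,1)`, `(n_k - 1) c_k < 1`. -/
def CantorParams (n : ℕ → ℕ) (c : ℕ → ℝ) : Prop :=
  ∀ k, 1 ≤ k → 2 ≤ n k ∧ 0 < c k ∧ c k < 1 ∧ ((n k : ℝ) - 1) * c k < 1

/-- `p` is an `n`-matching sequence of positive probability vectors. -/
def MatchingSeq (n : ℕ → ℕ) (p : ℕ → ℕ → ℝ) : Prop :=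
  ∀ k, 1 ≤ k → (∀ i, 1 ≤ i → i ≤ n k → 0 < p k i) ∧ ∑ i ∈ Finset.Icc 1 (n k), p k i = 1

/-- `μ` is the Borel probability measure on `E(n,c)` determined by the matching sequence `p`:
`μ(I_{wi}) = p_{k,i} μ(I_w)`. -/
def MatchingMeasure (n : ℕ → ℕ) (c : ℕ → ℝ) (p : ℕ → ℕ → ℝ) (μ : Measure ℝ) : Prop :=
  IsProbabilityMeasure μ ∧ μ (uniformCantorSet n c)ᶜ = 0 ∧
    ∀ k, 1 ≤ k → ∀ w : ℕ → ℕ, IsWord n w (k - 1) → ∀ i, 1 ≤ i → i ≤ n k →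
      μ (cInt n c (Function.update w k i) k) =
        ENNReal.ofReal (p k i) * μ (cInt n c w (k - 1))

/-- `μ` is doubling with constant `C` on the metric space `E` (balls of `E`). -/
def DoublingOn (μ : Measure ℝ) (E : Set ℝ) (C : ℝ≥0∞) : Prop :=
  ∀ x ∈ E, ∀ r : ℝ, 0 < r →
    0 < μ (Metric.ball x (2 * r) ∩ E) ∧
      μ (Metric.ball x (2 * r) ∩ E) ≤ C * μ (Metric.ball x r ∩ E) ∧
      μ (Metric.ball x (2 * r) ∩ E) < ⊤

/-- The vector `(p 1, …, p k)` is `C`-uniform: any two adjacent (overlapping allowed) sums of `l`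
consecutive entries are comparable within the factor `C`. -/
def IsUniform (C : ℝ) (k : ℕ) (p : ℕ → ℝ) : Prop :=
  ∀ i j l : ℕ, i ≤ j → j ≤ i + l → j + l ≤ k →
    C⁻¹ * (∑ t ∈ Finset.Ioc j (j + l), p t) ≤ (∑ t ∈ Finset.Ioc i (i + l), p t) ∧
      (∑ t ∈ Finset.Ioc i (i + l), p t) ≤ C * ∑ t ∈ Finset.Ioc j (j + l), p t


/-!
From level `k₀` on, `μ` splits every component evenly among its children, so an initial piece
of length `h ≤ δ_k` of a level-`k` component `I` carries `μ`-mass at least `h / (4 δ_k) · μ(I)`.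
Doubling of `ν` at the midpoint of the gap left of a level-`(k+1)` child `J` then gives
`D ν(gap) ≥ n_{k+1} c_{k+1} μ(J) / 8`. As `ν ≥ μ`, summing over the children and gaps of a
level-`k` component and iterating `m` levels down yields
`(D + ∑_{k < t ≤ k + m} n_t c_t / 16) μ(I) ≤ D ν(I) ≤ D ν([0,1]) < ∞`.
-/

open Function

lemma sum_measure_le_of_pairwiseDisjoint {α ι : Type*} [MeasurableSpace α] (ρ : Measure α)
    {s : Finset ι} {f : ι → Set α} {A : Set α} (hd : (s : Set ι).PairwiseDisjoint f)
    (hm : ∀ i ∈ s, MeasurableSet (f i)) (hsub : ∀ i ∈ s, f i ⊆ A) : ∑ i ∈ s, ρ (f i) ≤ ρ A :=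
  (measure_biUnion_finset hd hm).symm.trans_le (measure_mono (Set.iUnion₂_subset hsub))

lemma pairwiseDisjoint_Ico_add_mul (a : ℝ) {q : ℝ} (hq : 0 ≤ q) (s : Set ℕ) :
    s.PairwiseDisjoint fun i : ℕ => Set.Ico (a + i * q) (a + (i + 1) * q) := by
  have hmono : Monotone fun i : ℕ => a + i * q := fun i j hij => by
    simp only
    gcongr
  simpa [Set.PairwiseDisjoint, Order.succ_eq_add_one] using
    hmono.pairwise_disjoint_on_Ico_succ.set_pairwise s

lemma summable_of_sum_range_ofReal_mul_le {a : ℕ → ℝ} (ha : ∀ t, 0 ≤ a t) {x K : ℝ≥0∞}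
    (hx : x ≠ 0) (hK : K ≠ ⊤) (h : ∀ m, (∑ t ∈ range m, ENNReal.ofReal (a t)) * x ≤ K) :
    Summable a := by
  have htsum : ∑' t, ENNReal.ofReal (a t) ≠ ⊤ :=
    ne_top_of_le_ne_top (ENNReal.div_lt_top hK hx).ne <| ENNReal.tsum_le_of_sum_range_le fun m =>
      (ENNReal.le_div_iff_mul_le (Or.inl hx) (Or.inr hK)).mpr (h m)
  simpa [ENNReal.toReal_ofReal (ha _)] using ENNReal.summable_toReal htsum

lemma DoublingOn.measure_Icc_lt_top {ν : Measure ℝ} {D : ℝ≥0∞}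
    (hdbl : DoublingOn ν (Set.Icc 0 1) D) : ν (Set.Icc 0 1) < ⊤ := by
  have hball : Metric.ball (0 : ℝ) (2 * 1) ∩ Set.Icc 0 1 = Set.Icc 0 1 :=
    Set.inter_eq_self_of_subset_right fun x hx => by
      rw [Real.ball_eq_Ioo]; constructor <;> linarith [hx.1, hx.2]
  have := (hdbl 0 (Set.left_mem_Icc.mpr zero_le_one) 1 one_pos).2.2
  rwa [hball] at this

lemma IsWord.mono {n w : ℕ → ℕ} {k m : ℕ} (hw : IsWord n w k) (hm : m ≤ k) : IsWord n w m :=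
  fun j hj hjm => hw j hj (hjm.trans hm)

lemma IsWord.update {n w : ℕ → ℕ} {k i : ℕ} (hw : IsWord n w k) (h1 : 1 ≤ i)
    (h2 : i ≤ n (k + 1)) : IsWord n (update w (k + 1) i) (k + 1) := by
  intro j hj hjk
  rcases eq_or_ne j (k + 1) with rfl | hne
  · simpa using ⟨h1, h2⟩
  · rw [update_of_ne hne]
    exact hw j hj (by omega)

section Geometry

variable {n : ℕ → ℕ} {c : ℕ → ℝ}

def leftGap (n : ℕ → ℕ) (c : ℕ → ℝ) (u : ℕ → ℕ) (k : ℕ) : Set ℝ :=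
  Set.Ioo (leftpt n c u k - ceps n c k) (leftpt n c u k)

lemma cdelta_zero : cdelta n c 0 = 1 := by simp [cdelta]

lemma cdelta_succ (k : ℕ) :
    cdelta n c (k + 1) = cdelta n c k * ((1 - ((n (k + 1) : ℝ) - 1) * c (k + 1)) / n (k + 1)) :=
  prod_Icc_succ_top (Nat.le_add_left 1 k) _

lemma ceps_succ (k : ℕ) : ceps n c (k + 1) = c (k + 1) * cdelta n c k := rfl

lemma leftpt_succ (w : ℕ → ℕ) (k : ℕ) :
    leftpt n c w (k + 1) =
      leftpt n c w k + ((w (k + 1) : ℝ) - 1) * (cdelta n c (k + 1) + ceps n c (k + 1)) :=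
  sum_Icc_succ_top (Nat.le_add_left 1 k) _

lemma leftpt_update (w : ℕ → ℕ) (k i : ℕ) :
    leftpt n c (update w (k + 1) i) (k + 1) =
      leftpt n c w k + ((i : ℝ) - 1) * (cdelta n c (k + 1) + ceps n c (k + 1)) := by
  rw [leftpt_succ, update_self]
  congr 1
  exact sum_congr rfl fun j hj => by rw [update_of_ne (by grind)]

lemma cInt_update_succ (w : ℕ → ℕ) (k i : ℕ) :
    cInt n c (update w (k + 1) (i + 1)) (k + 1) =
      Set.Icc (leftpt n c w k + i * (cdelta n c (k + 1) + ceps n c (k + 1)))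
        (leftpt n c w k + i * (cdelta n c (k + 1) + ceps n c (k + 1)) + cdelta n c (k + 1)) := by
  rw [cInt, leftpt_update]
  push_cast
  congr 1 <;> ring

lemma leftGap_update_succ_succ (w : ℕ → ℕ) (k i : ℕ) :
    leftGap n c (update w (k + 1) (i + 2)) (k + 1) =
      Set.Ioo (leftpt n c w k + i * (cdelta n c (k + 1) + ceps n c (k + 1)) + cdelta n c (k + 1))
        (leftpt n c w k + (i + 1) * (cdelta n c (k + 1) + ceps n c (k + 1))) := by
  rw [leftGap, leftpt_update]
  push_cast
  congr 1 <;> ring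

lemma cInt_zero (w : ℕ → ℕ) : cInt n c w 0 = Set.Icc 0 1 := by
  simp [cInt, leftpt, cdelta]

lemma uniformCantorSet_subset_Icc : uniformCantorSet n c ⊆ Set.Icc 0 1 := fun x hx => by
  obtain ⟨w, -, hw⟩ := Set.mem_iUnion₂.mp (Set.mem_iInter.mp hx 0)
  rwa [cInt_zero] at hw

variable (hnc : CantorParams n c)
include hnc

lemma cdelta_pos (k : ℕ) : 0 < cdelta n c k := by
  induction k with
  | zero => simp [cdelta_zero]
  | succ k ih =>
    obtain ⟨hn, -, -, hc⟩ := hnc (k + 1) (Nat.le_add_left 1 k)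
    rw [cdelta_succ]
    exact mul_pos ih (div_pos (by linarith) (by norm_cast; omega))

lemma ceps_succ_pos (k : ℕ) : 0 < ceps n c (k + 1) :=
  mul_pos (hnc (k + 1) (Nat.le_add_left 1 k)).2.1 (cdelta_pos hnc k)

-- The `n (k+1)` children of a level-`k` component and the gaps between them exactly fill it.
lemma cdelta_eq_sub_one_mul_add (k : ℕ) :
    cdelta n c k =
      ((n (k + 1) : ℝ) - 1) * (cdelta n c (k + 1) + ceps n c (k + 1)) + cdelta n c (k + 1) := by
  have hn : (n (k + 1) : ℝ) ≠ 0 := by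
    have := (hnc (k + 1) (Nat.le_add_left 1 k)).1
    positivity
  rw [cdelta_succ, ceps_succ]
  field_simp
  ring

lemma natCast_mul_cdelta_succ_le (k : ℕ) : n (k + 1) * cdelta n c (k + 1) ≤ cdelta n c k := by
  have hn : (2 : ℝ) ≤ n (k + 1) := by exact_mod_cast (hnc (k + 1) (Nat.le_add_left 1 k)).1
  nlinarith [cdelta_eq_sub_one_mul_add hnc k, ceps_succ_pos hnc k]

lemma natCast_mul_cdelta_add_ceps_le (k : ℕ) :
    n (k + 1) * (cdelta n c (k + 1) + ceps n c (k + 1)) ≤ 2 * cdelta n c k := by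
  have hc := (hnc (k + 1) (Nat.le_add_left 1 k)).2.2.1
  have hε : ceps n c (k + 1) ≤ cdelta n c k := by
    rw [ceps_succ]
    nlinarith [cdelta_pos hnc k]
  linarith [cdelta_eq_sub_one_mul_add hnc k]

lemma exists_cdelta_add_lt (k : ℕ) {h : ℝ} (hh : 0 < h) : ∃ m, cdelta n c (k + m) < h := by
  have hhalf : ∀ m, cdelta n c (k + m) ≤ cdelta n c k * (1 / 2) ^ m := by
    intro m
    induction m with
    | zero => simp
    | succ m ih =>
      have hn : (2 : ℝ) ≤ n (k + m + 1) := by exact_mod_cast (hnc _ (Nat.le_add_left 1 _)).1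
      have := natCast_mul_cdelta_succ_le hnc (k + m)
      rw [pow_succ, ← add_assoc]
      nlinarith [cdelta_pos hnc (k + m + 1)]
  obtain ⟨m, hm⟩ := exists_pow_lt_of_lt_one (div_pos hh (cdelta_pos hnc k)) one_half_lt_one
  refine ⟨m, (hhalf m).trans_lt ?_⟩
  rwa [lt_div_iff₀ (cdelta_pos hnc k), mul_comm] at hm

lemma cInt_succ_subset {w : ℕ → ℕ} {k : ℕ} (h1 : 1 ≤ w (k + 1)) (h2 : w (k + 1) ≤ n (k + 1)) :
    cInt n c w (k + 1) ⊆ cInt n c w k := by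
  have h1' : (1 : ℝ) ≤ w (k + 1) := by exact_mod_cast h1
  have h2' : (w (k + 1) : ℝ) ≤ n (k + 1) := by exact_mod_cast h2
  have hq : 0 < cdelta n c (k + 1) + ceps n c (k + 1) :=
    add_pos (cdelta_pos hnc _) (ceps_succ_pos hnc k)
  rw [cInt, cInt, leftpt_succ]
  refine Set.Icc_subset_Icc (by nlinarith) ?_
  nlinarith [cdelta_eq_sub_one_mul_add hnc k]

lemma cInt_subset_Icc {w : ℕ → ℕ} {k : ℕ} (hw : IsWord n w k) :
    cInt n c w k ⊆ Set.Icc 0 1 := by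
  induction k with
  | zero => rw [cInt_zero]
  | succ k ih =>
    obtain ⟨h1, h2⟩ := hw (k + 1) (Nat.le_add_left 1 k) le_rfl
    exact (cInt_succ_subset hnc h1 h2).trans (ih (hw.mono k.le_succ))

lemma leftpt_mem_Icc {w : ℕ → ℕ} {k : ℕ} (hw : IsWord n w k) : leftpt n c w k ∈ Set.Icc 0 1 :=
  cInt_subset_Icc hnc hw (Set.left_mem_Icc.mpr (by linarith [cdelta_pos hnc k]))

lemma sum_measure_children_add_sum_measure_leftGap_le (ρ : Measure ℝ) (w : ℕ → ℕ) (k : ℕ) :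
    ∑ i ∈ range (n (k + 1)), ρ (cInt n c (update w (k + 1) (i + 1)) (k + 1)) +
        ∑ i ∈ range (n (k + 1) - 1), ρ (leftGap n c (update w (k + 1) (i + 2)) (k + 1)) ≤
      ρ (cInt n c w k) := by
  set a := leftpt n c w k
  set δ := cdelta n c (k + 1)
  set q := δ + ceps n c (k + 1)
  have hδ : 0 < δ := cdelta_pos hnc _
  have hq : δ < q := lt_add_of_pos_right _ (ceps_succ_pos hnc k)
  obtain ⟨M, hM⟩ : ∃ M, n (k + 1) = M + 1 :=
    ⟨n (k + 1) - 1, by have := (hnc (k + 1) (Nat.le_add_left 1 k)).1; omega⟩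
  have hband : ∀ i : ℕ, ρ (cInt n c (update w (k + 1) (i + 1)) (k + 1)) +
      ρ (leftGap n c (update w (k + 1) (i + 2)) (k + 1)) =
        ρ (Set.Ico (a + i * q) (a + (i + 1) * q)) := fun i => by
    rw [cInt_update_succ, leftGap_update_succ_succ,
      ← measure_union (Set.disjoint_left.mpr fun x hx hx' => hx'.1.not_ge hx.2) measurableSet_Ioo,
      Set.Icc_union_Ioo_eq_Ico (by linarith) (by linarith)]
  have hI : cInt n c w k = Set.Ico a (a + M * q) ∪ Set.Icc (a + M * q) (a + M * q + δ) := by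
    rw [Set.Ico_union_Icc_eq_Icc (by nlinarith [(Nat.cast_nonneg M : (0 : ℝ) ≤ M)])
      (by linarith), cInt, cdelta_eq_sub_one_mul_add hnc k, hM]
    push_cast
    congr 1
    ring
  rw [hM, sum_range_succ, Nat.add_sub_cancel, add_right_comm, ← sum_add_distrib,
    sum_congr rfl fun i _ => hband i, cInt_update_succ, hI,
    measure_union (Set.disjoint_left.mpr fun x hx hx' => hx.2.not_ge hx'.1) measurableSet_Icc]
  gcongr
  refine sum_measure_le_of_pairwiseDisjoint ρ (pairwiseDisjoint_Ico_add_mul a (by linarith) _)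
    (fun i _ => measurableSet_Ico) fun i hi => Set.Ico_subset_Ico ?_ ?_
  · nlinarith [(Nat.cast_nonneg i : (0 : ℝ) ≤ i)]
  · have : (i : ℝ) + 1 ≤ M := by exact_mod_cast mem_range.mp hi
    nlinarith

end Geometry

section Measure

variable {n : ℕ → ℕ} {c : ℕ → ℝ} {p : ℕ → ℕ → ℝ} {μ : Measure ℝ}

def SplitsEvenlyFrom (n : ℕ → ℕ) (c : ℕ → ℝ) (μ : Measure ℝ) (k₀ : ℕ) : Prop :=
  ∀ k, k₀ ≤ k → ∀ w, IsWord n w k → ∀ i, 1 ≤ i → i ≤ n (k + 1) →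
    μ (cInt n c (update w (k + 1) i) (k + 1)) = (n (k + 1) : ℝ≥0∞)⁻¹ * μ (cInt n c w k)

lemma MatchingMeasure.splitsEvenlyFrom (hμ : MatchingMeasure n c p μ) {k₀ : ℕ}
    (huni : ∀ k, k₀ ≤ k → ∀ i, 1 ≤ i → i ≤ n k → p k i = 1 / (n k : ℝ)) :
    SplitsEvenlyFrom n c μ k₀ := by
  intro k hk w hw i hi1 hi2
  have hN : (0 : ℝ) < n (k + 1) := Nat.cast_pos.mpr (by omega)
  rw [hμ.2.2 (k + 1) (Nat.le_add_left 1 k) w (by simpa using hw) i hi1 hi2,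
    huni (k + 1) (by omega) i hi1 hi2, one_div, ENNReal.ofReal_inv_of_pos hN,
    ENNReal.ofReal_natCast, Nat.add_sub_cancel]

lemma MatchingMeasure.measure_cInt_pos (hμ : MatchingMeasure n c p μ) (hp : MatchingSeq n p)
    {w : ℕ → ℕ} {k : ℕ} (hw : IsWord n w k) : 0 < μ (cInt n c w k) := by
  induction k with
  | zero =>
    have := hμ.1
    rw [cInt_zero, pos_iff_ne_zero]
    intro h0
    have : μ Set.univ ≤ 0 := calc
      μ Set.univ ≤ μ (Set.Icc 0 1) + μ (Set.Icc 0 1)ᶜ := measure_univ_le_add_compl _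
      _ ≤ 0 + μ (uniformCantorSet n c)ᶜ :=
        add_le_add h0.le (measure_mono (Set.compl_subset_compl.mpr uniformCantorSet_subset_Icc))
      _ = 0 := by rw [hμ.2.1, add_zero]
    simp at this
  | succ k ih =>
    obtain ⟨h1, h2⟩ := hw (k + 1) (Nat.le_add_left 1 k) le_rfl
    have hrec :=
      hμ.2.2 (k + 1) (Nat.le_add_left 1 k) w (by simpa using hw.mono k.le_succ) _ h1 h2
    rw [update_eq_self] at hrec
    rw [hrec]
    exact ENNReal.mul_pos
      (ENNReal.ofReal_pos.mpr ((hp (k + 1) (Nat.le_add_left 1 k)).1 _ h1 h2)).ne'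
      (ih (hw.mono k.le_succ)).ne'

end Measure

section Density

variable {n : ℕ → ℕ} {c : ℕ → ℝ} {μ : Measure ℝ} {k₀ k : ℕ} {v : ℕ → ℕ}
  (hnc : CantorParams n c) (hsplit : SplitsEvenlyFrom n c μ k₀)
include hnc hsplit

lemma natCast_mul_le_measure_Ico_leftpt (hk : k₀ ≤ k) (hv : IsWord n v k) {L : ℕ}
    (hL : L ≤ n (k + 1)) {h : ℝ}
    (hh : ((L : ℝ) - 1) * (cdelta n c (k + 1) + ceps n c (k + 1)) + cdelta n c (k + 1) < h) :
    L * ((n (k + 1) : ℝ≥0∞)⁻¹ * μ (cInt n c v k)) ≤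
      μ (Set.Ico (leftpt n c v k) (leftpt n c v k + h)) := by
  set a := leftpt n c v k
  set q := cdelta n c (k + 1) + ceps n c (k + 1)
  have hq : 0 < q := add_pos (cdelta_pos hnc _) (ceps_succ_pos hnc k)
  have hδq : cdelta n c (k + 1) < q := lt_add_of_pos_right _ (ceps_succ_pos hnc k)
  calc (L : ℝ≥0∞) * _ = ∑ i ∈ range L, μ (cInt n c (update v (k + 1) (i + 1)) (k + 1)) := by
        rw [sum_congr rfl fun i hi => hsplit k hk v hv (i + 1) (by omega)
          (by rw [mem_range] at hi; omega), sum_const, card_range, nsmul_eq_mul]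
    _ ≤ μ (Set.Ico a (a + h)) := by
      refine sum_measure_le_of_pairwiseDisjoint μ ?_ (fun i _ => measurableSet_Icc)
        fun i hi => ?_
      · refine (pairwiseDisjoint_Ico_add_mul a hq.le _).mono fun i x hx => ?_
        rw [cInt_update_succ] at hx
        exact ⟨hx.1, by linarith [hx.2]⟩
      · have hiL : (i : ℝ) + 1 ≤ L := by exact_mod_cast mem_range.mp hi
        rw [cInt_update_succ]
        refine Set.Icc_subset_Ico_iff (by linarith [cdelta_pos hnc (k + 1)]) |>.mpr ⟨?_, ?_⟩
        · nlinarith [(Nat.cast_nonneg i : (0 : ℝ) ≤ i)]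
        · nlinarith

lemma le_measure_Ico_leftpt_of_cdelta_succ_lt (hk : k₀ ≤ k) (hv : IsWord n v k) {h : ℝ}
    (hh1 : cdelta n c (k + 1) < h) (hh : h ≤ cdelta n c k) :
    ENNReal.ofReal (h / (4 * cdelta n c k)) * μ (cInt n c v k) ≤
      μ (Set.Ico (leftpt n c v k) (leftpt n c v k + h)) := by
  set q := cdelta n c (k + 1) + ceps n c (k + 1)
  set N := n (k + 1)
  have hq : 0 < q := add_pos (cdelta_pos hnc _) (ceps_succ_pos hnc k)
  have hδ := cdelta_pos hnc k
  -- `L` is the number of children that fit entirely inside `[a, a + h)`.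
  set L := ⌈(h - cdelta n c (k + 1)) / q⌉₊
  have hL1 : (1 : ℝ) ≤ L := by exact_mod_cast Nat.ceil_pos.mpr (div_pos (by linarith) hq)
  have hLge : h ≤ L * q + cdelta n c (k + 1) := by
    have := (div_le_iff₀ hq).mp (Nat.le_ceil ((h - cdelta n c (k + 1)) / q))
    linarith
  have hLlt : ((L : ℝ) - 1) * q + cdelta n c (k + 1) < h := by
    have : (L : ℝ) < (h - cdelta n c (k + 1)) / q + 1 :=
      Nat.ceil_lt_add_one (div_nonneg (by linarith) hq.le)
    have : ((L : ℝ) - 1) * q < h - cdelta n c (k + 1) := by rw [← lt_div_iff₀ hq]; linarith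
    linarith
  have hLN : L ≤ N := by
    have : (L : ℝ) < N + 1 := by nlinarith [cdelta_eq_sub_one_mul_add hnc k]
    exact_mod_cast Nat.lt_succ_iff.mp (by exact_mod_cast this)
  refine le_trans ?_ (natCast_mul_le_measure_Ico_leftpt hnc hsplit hk hv hLN hLlt)
  rw [← mul_assoc]
  gcongr
  have hN : (0 : ℝ) < N := by have := (hnc (k + 1) (Nat.le_add_left 1 k)).1; positivity
  rw [← ENNReal.ofReal_natCast, ← ENNReal.ofReal_natCast N, ← ENNReal.ofReal_inv_of_pos hN,
    ← ENNReal.ofReal_mul (by positivity)]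
  refine ENNReal.ofReal_le_ofReal ?_
  rw [← div_eq_mul_inv, div_le_div_iff₀ (by positivity) hN]
  have h2L : h ≤ 2 * L * q := by
    nlinarith [lt_add_of_pos_right (cdelta n c (k + 1)) (ceps_succ_pos hnc k)]
  nlinarith [mul_le_mul_of_nonneg_right h2L hN.le,
    mul_le_mul_of_nonneg_left (natCast_mul_cdelta_add_ceps_le hnc k) (Nat.cast_nonneg' L)]

-- If `h ≤ δ_{k+1}`, pass to the first child, which has the same left endpoint.
lemma le_measure_Ico_leftpt (hk : k₀ ≤ k) (hv : IsWord n v k) {h : ℝ} (h0 : 0 < h)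
    (hh : h ≤ cdelta n c k) :
    ENNReal.ofReal (h / (4 * cdelta n c k)) * μ (cInt n c v k) ≤
      μ (Set.Ico (leftpt n c v k) (leftpt n c v k + h)) := by
  obtain ⟨m, hm⟩ := exists_cdelta_add_lt hnc k h0
  induction m generalizing k v with
  | zero => exact absurd hh (not_le.mpr hm)
  | succ m ih =>
    rcases lt_or_ge (cdelta n c (k + 1)) h with h1 | h1
    · exact le_measure_Ico_leftpt_of_cdelta_succ_lt hnc hsplit hk hv h1 hh
    have hN : 1 ≤ n (k + 1) := by have := (hnc (k + 1) (Nat.le_add_left 1 k)).1; omega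
    have hfirst := ih (k := k + 1) (hk.trans k.le_succ) (hv.update le_rfl hN) h1
      (by convert hm using 2; omega)
    rw [leftpt_update, Nat.cast_one, sub_self, zero_mul, add_zero,
      hsplit k hk v hv 1 le_rfl hN, ← mul_assoc] at hfirst
    refine le_trans ?_ hfirst
    gcongr
    have hN' : (0 : ℝ) < n (k + 1) := by exact_mod_cast hN
    have hδ := cdelta_pos hnc (k + 1)
    rw [← ENNReal.ofReal_natCast, ← ENNReal.ofReal_inv_of_pos hN',
      ← ENNReal.ofReal_mul (by positivity)]
    refine ENNReal.ofReal_le_ofReal ?_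
    calc h / (4 * cdelta n c k) ≤ h / (4 * (n (k + 1) * cdelta n c (k + 1))) := by
          gcongr
          exact natCast_mul_cdelta_succ_le hnc k
      _ = h / (4 * cdelta n c (k + 1)) * (n (k + 1) : ℝ)⁻¹ := by field_simp

end Density

section Doubling

variable {n : ℕ → ℕ} {c : ℕ → ℝ} {μ ν : Measure ℝ} {k₀ : ℕ} {D : ℝ≥0∞}
  (hnc : CantorParams n c) (hsplit : SplitsEvenlyFrom n c μ k₀)
  (hext : ν.restrict (uniformCantorSet n c) = μ) (hdbl : DoublingOn ν (Set.Icc 0 1) D)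
include hnc hsplit hext hdbl

-- The ball of radius `ε_{k+1}` around the midpoint of the gap reaches `min (ε_{k+1}/2) δ_{k+1}`
-- into `I_u`, whose `μ`-mass is then controlled by the density estimate.
lemma ofReal_mul_le_mul_measure_leftGap {k : ℕ} (hk : k₀ ≤ k + 1) {u : ℕ → ℕ}
    (hu : IsWord n u (k + 1)) (hu2 : 2 ≤ u (k + 1)) :
    ENNReal.ofReal (n (k + 1) * c (k + 1) / 8) * μ (cInt n c u (k + 1)) ≤
      D * ν (leftGap n c u (k + 1)) := by
  set z := leftpt n c u (k + 1)
  set δ := cdelta n c (k + 1)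
  set ε := ceps n c (k + 1)
  set r := min (ε / 2) δ
  have hε : 0 < ε := ceps_succ_pos hnc k
  have hδ : 0 < δ := cdelta_pos hnc _
  have hr : 0 < r := lt_min (by positivity) hδ
  have hy : z - ε / 2 ∈ Set.Icc (0 : ℝ) 1 := by
    have hz : z = leftpt n c u k + ((u (k + 1) : ℝ) - 1) * (δ + ε) := leftpt_succ u k
    have hu2' : (2 : ℝ) ≤ u (k + 1) := by exact_mod_cast hu2
    have h0 := (leftpt_mem_Icc hnc (hu.mono k.le_succ)).1
    have h1 := (leftpt_mem_Icc hnc hu).2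
    constructor <;> nlinarith
  have hball : Metric.ball (z - ε / 2) (ε / 2) = leftGap n c u (k + 1) := by
    rw [Real.ball_eq_Ioo, leftGap]
    congr 1 <;> ring
  have hsub : Set.Ico z (z + r) ∩ uniformCantorSet n c ⊆
      Metric.ball (z - ε / 2) (2 * (ε / 2)) ∩ Set.Icc 0 1 := fun x ⟨hx, hxE⟩ => by
    refine ⟨?_, uniformCantorSet_subset_Icc hxE⟩
    rw [Real.ball_eq_Ioo]
    constructor <;> linarith [hx.1, hx.2, min_le_left (ε / 2) δ]
  have hcoef : (n (k + 1) : ℝ) * c (k + 1) / 8 ≤ r / (4 * δ) := by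
    obtain ⟨hn, hc, hc1, hnc1⟩ := hnc (k + 1) (Nat.le_add_left 1 k)
    have hnδ := natCast_mul_cdelta_succ_le hnc k
    have hεδ : ε = c (k + 1) * cdelta n c k := ceps_succ k
    rw [div_le_div_iff₀ (by norm_num) (by positivity)]
    have : (n (k + 1) : ℝ) * c (k + 1) * δ / 2 ≤ r := le_min (by nlinarith) (by nlinarith)
    nlinarith
  calc ENNReal.ofReal (n (k + 1) * c (k + 1) / 8) * μ (cInt n c u (k + 1))
      ≤ ENNReal.ofReal (r / (4 * δ)) * μ (cInt n c u (k + 1)) := by gcongr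
    _ ≤ μ (Set.Ico z (z + r)) := le_measure_Ico_leftpt hnc hsplit hk hu hr (min_le_right _ _)
    _ = ν (Set.Ico z (z + r) ∩ uniformCantorSet n c) := by
      rw [← hext, Measure.restrict_apply measurableSet_Ico]
    _ ≤ ν (Metric.ball (z - ε / 2) (2 * (ε / 2)) ∩ Set.Icc 0 1) := measure_mono hsub
    _ ≤ D * ν (Metric.ball (z - ε / 2) (ε / 2) ∩ Set.Icc 0 1) :=
      (hdbl _ hy _ (by positivity)).2.1
    _ ≤ D * ν (leftGap n c u (k + 1)) := by
      gcongr
      rw [hball]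
      exact Set.inter_subset_left

lemma add_sum_mul_measure_le_mul_measure {k : ℕ} (hk : k₀ ≤ k) {w : ℕ → ℕ}
    (hw : IsWord n w k) (m : ℕ) :
    (D + ∑ t ∈ range m, ENNReal.ofReal (n (t + (k + 1)) * c (t + (k + 1)) / 16)) *
        μ (cInt n c w k) ≤ D * ν (cInt n c w k) := by
  induction m generalizing k w with
  | zero =>
    rw [sum_range_zero, add_zero, ← hext]
    gcongr
    exact Measure.restrict_le_self
  | succ m ih =>
    set N := n (k + 1)
    set X := (N : ℝ≥0∞)⁻¹ * μ (cInt n c w k)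
    set S := ∑ t ∈ range m, ENNReal.ofReal (n (t + (k + 1 + 1)) * c (t + (k + 1 + 1)) / 16)
    set g := ENNReal.ofReal (N * c (k + 1) / 8)
    obtain ⟨hN, hc, -, -⟩ := hnc (k + 1) (Nat.le_add_left 1 k)
    have hchild : ∀ i ∈ range N,
        (D + S) * X ≤ D * ν (cInt n c (update w (k + 1) (i + 1)) (k + 1)) := by
      intro i hi
      have hi := mem_range.mp hi
      have := ih (hk.trans k.le_succ) (hw.update (Nat.le_add_left 1 i) hi)
      rwa [hsplit k hk w hw (i + 1) (Nat.le_add_left 1 i) hi] at this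
    have hgap : ∀ i ∈ range (N - 1),
        g * X ≤ D * ν (leftGap n c (update w (k + 1) (i + 2)) (k + 1)) := by
      intro i hi
      have hi : i + 2 ≤ N := by have := mem_range.mp hi; omega
      have := ofReal_mul_le_mul_measure_leftGap hnc hsplit hext hdbl (hk.trans k.le_succ)
        (hw.update (by omega) hi) (by simp)
      rwa [hsplit k hk w hw (i + 2) (by omega) hi] at this
    have hμX : μ (cInt n c w k) = N * X :=
      (ENNReal.mul_inv_cancel_left (by simp; omega) (by simp)).symm
    have hcoef : ENNReal.ofReal (N * c (k + 1) / 16) * N ≤ ((N - 1 : ℕ) : ℝ≥0∞) * g := by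
      have hN' : (2 : ℝ) ≤ N := by exact_mod_cast hN
      rw [← ENNReal.ofReal_natCast, ← ENNReal.ofReal_natCast, ← ENNReal.ofReal_mul (by positivity),
        ← ENNReal.ofReal_mul (by positivity), Nat.cast_sub (by omega), Nat.cast_one]
      refine ENNReal.ofReal_le_ofReal ?_
      nlinarith [mul_pos (by positivity : (0 : ℝ) < N) hc]
    have hsum : ∑ t ∈ range (m + 1), ENNReal.ofReal (n (t + (k + 1)) * c (t + (k + 1)) / 16) =
        S + ENNReal.ofReal (N * c (k + 1) / 16) := by
      rw [sum_range_succ', zero_add]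
      exact congrArg₂ _ (sum_congr rfl fun t _ => by
        rw [show t + 1 + (k + 1) = t + (k + 1 + 1) by omega]) rfl
    calc (D + ∑ t ∈ range (m + 1), ENNReal.ofReal (n (t + (k + 1)) * c (t + (k + 1)) / 16)) *
          μ (cInt n c w k)
        = N * ((D + S) * X) + ENNReal.ofReal (N * c (k + 1) / 16) * N * X := by
          rw [hsum, hμX]
          ring
      _ ≤ N * ((D + S) * X) + ((N - 1 : ℕ) : ℝ≥0∞) * g * X :=
          add_le_add_right (mul_le_mul_of_nonneg_right hcoef bot_le) _
      _ = ∑ i ∈ range N, (D + S) * X + ∑ i ∈ range (N - 1), g * X := by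
          simp only [sum_const, card_range, nsmul_eq_mul, mul_assoc]
      _ ≤ ∑ i ∈ range N, D * ν (cInt n c (update w (k + 1) (i + 1)) (k + 1)) +
            ∑ i ∈ range (N - 1), D * ν (leftGap n c (update w (k + 1) (i + 2)) (k + 1)) :=
          add_le_add (sum_le_sum hchild) (sum_le_sum hgap)
      _ ≤ D * ν (cInt n c w k) := by
          rw [← mul_sum, ← mul_sum, ← mul_add]
          gcongr
          exact sum_measure_children_add_sum_measure_leftGap_le hnc ν w k

end Doubling

theorem stmt11_general (n : ℕ → ℕ) (c : ℕ → ℝ) (p : ℕ → ℕ → ℝ) (μ ν : Measure ℝ)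
    (h : CantorParams n c) (hp : MatchingSeq n p)
    (huni : ∃ k₀, 1 ≤ k₀ ∧ ∀ k, k₀ ≤ k → ∀ i, 1 ≤ i → i ≤ n k → p k i = 1 / (n k : ℝ))
    (hμ : MatchingMeasure n c p μ)
    (hdbl : ∃ D : ℝ≥0∞, 1 ≤ D ∧ D < ⊤ ∧ DoublingOn ν (Set.Icc 0 1) D)
    (hext : ν.restrict (uniformCantorSet n c) = μ) :
    Summable (fun k => (n k : ℝ) * c k) := by
  obtain ⟨k₀, -, huni⟩ := huni
  obtain ⟨D, -, hD, hdbl⟩ := hdbl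
  have hw : IsWord n (fun _ => 1) k₀ := fun j hj _ => ⟨le_rfl, by linarith [(h j hj).1]⟩
  have hνI : ν (cInt n c (fun _ => 1) k₀) ≠ ⊤ :=
    (hdbl.measure_Icc_lt_top.trans_le' (measure_mono (cInt_subset_Icc h hw))).ne
  refine (summable_nat_add_iff (k₀ + 1)).mp <|
    (summable_div_const_iff (by norm_num : (16 : ℝ) ≠ 0)).mp <|
    summable_of_sum_range_ofReal_mul_le (fun t => ?_) (hμ.measure_cInt_pos hp hw).ne'
      (ENNReal.mul_ne_top hD.ne hνI) fun m => ?_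
  · have := (h (t + (k₀ + 1)) (by omega)).2.1
    positivity
  · refine le_trans ?_ (add_sum_mul_measure_le_mul_measure h (hμ.splitsEvenlyFrom huni) hext
      hdbl le_rfl hw m)
    gcongr
    exact le_add_self

theorem stmt11 (n : ℕ → ℕ) (c : ℕ → ℝ) (p : ℕ → ℕ → ℝ) (μ ν : Measure ℝ)
    (h : CantorParams n c) (hp : MatchingSeq n p)
    (huni : ∃ k₀, 1 ≤ k₀ ∧ ∀ k, k₀ ≤ k → ∀ i, 1 ≤ i → i ≤ n k → p k i = 1 / (n k : ℝ))
    (hμ : MatchingMeasure n c p μ)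
    (hν : ν (Set.Icc (0 : ℝ) 1)ᶜ = 0)
    (hdbl : ∃ D : ℝ≥0∞, 1 ≤ D ∧ D < ⊤ ∧ DoublingOn ν (Set.Icc 0 1) D)
    (hext : ν.restrict (uniformCantorSet n c) = μ) :
    Summable (fun k => (n k : ℝ) * c k) :=
  stmt11_general n c p μ ν h hp huni hμ hdbl hext
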